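/- arXiv:2210.15267 — 5 statements merged into one kernel-verified Lean document; each statement's English description precedes it below -/
import Mathlib

section
/- Let s ≥ 1, let f : X → ℂ be measurable with ‖f‖_{−s}² := ∫_X ω^{−s}|f|² dμ < ∞, let n ≥ 1, and let Ψ : Xⁿ → ℂ be measurable and symmetric with ∫_{Xⁿ} (Σ_{j=1}^n ω(k_j))^s |Ψ|² dμⁿ < ∞. Then for μ^{n−1}-almost every (k_1,…,k_{n−1}) ∈ X^{n−1} the function k ↦ conj(f(k))·Ψ(k_1,…,k_{n−1},k) is μ-integrable, and n·∫_{X^{n−1}} |∫_X conj(f(k)) Ψ(k_1,…,k_{n−1},k) dμ(k)|² dμ^{n−1} ≤ ‖f‖_{−s}² · ∫_{Xⁿ} (Σ_{j=1}^n ω(k_j))^s |Ψ|² dμⁿ. (This is the n-particle-sector content of the boundedness of the singular annihilation operator a(f) : F_s → F, with operator norm at most ‖f‖_{−s}.) -/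
open MeasureTheory ENNReal

/-!
Cauchy–Schwarz with the weight `ω ^ s` gives, for every `k`,
`|∫ conj f · Ψ(k, ·) dμ|² ≤ ‖f‖²₋ₛ · ∫ ω(κ)^s |Ψ(k, κ)|² dμ(κ)`, and the same bound makes the
inner integral absolutely convergent wherever the right side is finite, i.e. almost everywhere.
Integrating in `k` leaves the weighted norm of `Ψ` with the weight on the last coordinate only.
By symmetry of `Ψ` every coordinate gives the same value, so `n + 1` times it is the integral of
`(Σⱼ ω(kⱼ)^s) |Ψ|²`, and `Σⱼ ω(kⱼ)^s ≤ (Σⱼ ω(kⱼ))^s` because `s ≥ 1`.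
-/

theorem ENNReal.ofReal_sqrt_mul_rpow_two {a b : ℝ} (ha : 0 ≤ a) (hb : 0 ≤ b) :
    ENNReal.ofReal (√a * b) ^ (2 : ℝ) = ENNReal.ofReal (a * b ^ 2) := by
  rw [ENNReal.rpow_two, ← ENNReal.ofReal_pow (by positivity), mul_pow, Real.sq_sqrt ha]

section WeightedCauchySchwarz

variable {α : Type*} [MeasurableSpace α] {μ : Measure α} {w : α → ℝ}

theorem lintegral_enorm_mul_le_weighted {E F : Type*} [NormedAddCommGroup E]
    [NormedAddCommGroup F] (hw : Measurable w) (hw_pos : ∀ x, 0 < w x) {f : α → E} {g : α → F}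
    (hf : AEStronglyMeasurable f μ) (hg : AEStronglyMeasurable g μ) :
    ∫⁻ x, ‖f x‖ₑ * ‖g x‖ₑ ∂μ ≤
      (∫⁻ x, ENNReal.ofReal ((w x)⁻¹ * ‖f x‖ ^ 2) ∂μ) ^ (1 / 2 : ℝ) *
        (∫⁻ x, ENNReal.ofReal (w x * ‖g x‖ ^ 2) ∂μ) ^ (1 / 2 : ℝ) := by
  set F := fun x => ENNReal.ofReal (√(w x)⁻¹ * ‖f x‖)
  set G := fun x => ENNReal.ofReal (√(w x) * ‖g x‖)
  have hFG : ∀ x, ‖f x‖ₑ * ‖g x‖ₑ = (F * G) x := fun x => by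
    have hsqrt : √(w x)⁻¹ * √(w x) = 1 := by
      rw [Real.sqrt_inv, inv_mul_cancel₀ (Real.sqrt_pos.2 (hw_pos x)).ne']
    rw [Pi.mul_apply, ← ENNReal.ofReal_mul (by positivity), ← ofReal_norm,
      ← ofReal_norm, ← ENNReal.ofReal_mul (norm_nonneg _)]
    congr 1
    linear_combination (‖f x‖ * ‖g x‖) * hsqrt.symm
  have hF : AEMeasurable F μ :=
    (hw.inv.sqrt.aemeasurable.mul hf.norm.aemeasurable).ennreal_ofReal
  have hG : AEMeasurable G μ :=
    (hw.sqrt.aemeasurable.mul hg.norm.aemeasurable).ennreal_ofReal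
  calc ∫⁻ x, ‖f x‖ₑ * ‖g x‖ₑ ∂μ = ∫⁻ x, (F * G) x ∂μ := lintegral_congr hFG
    _ ≤ (∫⁻ x, F x ^ (2 : ℝ) ∂μ) ^ (1 / 2 : ℝ) *
          (∫⁻ x, G x ^ (2 : ℝ) ∂μ) ^ (1 / 2 : ℝ) :=
      ENNReal.lintegral_mul_le_Lp_mul_Lq μ .two_two hF hG
    _ = _ := by
      simp only [F, G, ENNReal.ofReal_sqrt_mul_rpow_two (inv_nonneg.2 (hw_pos _).le)
        (norm_nonneg _), ENNReal.ofReal_sqrt_mul_rpow_two (hw_pos _).le (norm_nonneg _)]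

variable {𝕜 : Type*} [RCLike 𝕜] {f g : α → 𝕜}

theorem integrable_conj_mul_of_lintegral_weighted_ne_top (hw : Measurable w)
    (hw_pos : ∀ x, 0 < w x) (hf : AEStronglyMeasurable f μ) (hg : AEStronglyMeasurable g μ)
    (hf_fin : ∫⁻ x, ENNReal.ofReal ((w x)⁻¹ * ‖f x‖ ^ 2) ∂μ ≠ ∞)
    (hg_fin : ∫⁻ x, ENNReal.ofReal (w x * ‖g x‖ ^ 2) ∂μ ≠ ∞) :
    Integrable (fun x => starRingEnd 𝕜 (f x) * g x) μ := by
  refine ⟨(hf.star.mul hg), hasFiniteIntegral_iff_enorm.2 ?_⟩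
  simp only [enorm_mul, RCLike.enorm_conj]
  exact (lintegral_enorm_mul_le_weighted hw hw_pos hf hg).trans_lt <|
    mul_lt_top (rpow_lt_top_of_nonneg (by norm_num) hf_fin)
      (rpow_lt_top_of_nonneg (by norm_num) hg_fin)

theorem ofReal_norm_integral_conj_mul_sq_le (hw : Measurable w) (hw_pos : ∀ x, 0 < w x)
    (hf : AEStronglyMeasurable f μ) (hg : AEStronglyMeasurable g μ) :
    ENNReal.ofReal (‖∫ x, starRingEnd 𝕜 (f x) * g x ∂μ‖ ^ 2) ≤
      (∫⁻ x, ENNReal.ofReal ((w x)⁻¹ * ‖f x‖ ^ 2) ∂μ) *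
        ∫⁻ x, ENNReal.ofReal (w x * ‖g x‖ ^ 2) ∂μ := by
  have h : ‖∫ x, starRingEnd 𝕜 (f x) * g x ∂μ‖ₑ ≤
      (∫⁻ x, ENNReal.ofReal ((w x)⁻¹ * ‖f x‖ ^ 2) ∂μ) ^ (1 / 2 : ℝ) *
        (∫⁻ x, ENNReal.ofReal (w x * ‖g x‖ ^ 2) ∂μ) ^ (1 / 2 : ℝ) :=
    calc _ ≤ ∫⁻ x, ‖starRingEnd 𝕜 (f x) * g x‖ₑ ∂μ := enorm_integral_le_lintegral_enorm _
      _ = ∫⁻ x, ‖f x‖ₑ * ‖g x‖ₑ ∂μ := by simp only [enorm_mul, RCLike.enorm_conj]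
      _ ≤ _ := lintegral_enorm_mul_le_weighted hw hw_pos hf hg
  rw [ENNReal.ofReal_pow (norm_nonneg _), ofReal_norm]
  calc _ ≤ _ := pow_le_pow_left' h 2
    _ = _ := by
      rw [mul_pow, ← ENNReal.rpow_natCast, ← ENNReal.rpow_natCast, ← ENNReal.rpow_mul,
        ← ENNReal.rpow_mul]
      norm_num

end WeightedCauchySchwarz

theorem ENNReal.sum_rpow_le_rpow_sum {ι : Type*} (t : Finset ι) (x : ι → ℝ≥0∞) {p : ℝ}
    (hp : 1 ≤ p) : ∑ i ∈ t, x i ^ p ≤ (∑ i ∈ t, x i) ^ p := by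
  classical
  induction t using Finset.induction_on with
  | empty => simp
  | insert a t ha ih =>
    rw [Finset.sum_insert ha, Finset.sum_insert ha]
    calc _ ≤ x a ^ p + (∑ i ∈ t, x i) ^ p := by gcongr
      _ ≤ _ := ENNReal.add_rpow_le_rpow_add _ _ hp

section ProductMeasure

variable {X : Type*} [MeasurableSpace X] (μ : Measure X) [SigmaFinite μ]

theorem lintegral_pi_comp_perm {ι : Type*} [Fintype ι] (σ : Equiv.Perm ι)
    (G : (ι → X) → ℝ≥0∞) :
    ∫⁻ k, G (k ∘ σ) ∂Measure.pi (fun _ => μ) = ∫⁻ k, G k ∂Measure.pi (fun _ => μ) := by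
  have h := (measurePreserving_piCongrLeft (fun _ : ι => μ) σ.symm).lintegral_comp_emb
    (MeasurableEquiv.measurableEmbedding _) G
  have hk : ∀ k : ι → X, k ∘ σ = MeasurableEquiv.piCongrLeft (fun _ => X) σ.symm k :=
    fun k => by
      ext i
      simp [MeasurableEquiv.coe_piCongrLeft, Equiv.piCongrLeft_apply]
  simpa only [← hk] using h

theorem lintegral_sum_eval_mul_of_perm_invariant {ι : Type*} [Fintype ι] {h : X → ℝ≥0∞}
    (hh : Measurable h) {Φ : (ι → X) → ℝ≥0∞} (hΦ : Measurable Φ)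
    (hsym : ∀ (σ : Equiv.Perm ι) k, Φ (k ∘ σ) = Φ k) (i : ι) :
    ∫⁻ k, (∑ j, h (k j)) * Φ k ∂Measure.pi (fun _ => μ) =
      Fintype.card ι * ∫⁻ k, h (k i) * Φ k ∂Measure.pi (fun _ => μ) := by
  classical
  have hcoord : ∀ j, ∫⁻ k, h (k j) * Φ k ∂Measure.pi (fun _ => μ) =
      ∫⁻ k, h (k i) * Φ k ∂Measure.pi (fun _ => μ) := fun j => by
    rw [← lintegral_pi_comp_perm μ (Equiv.swap i j)]
    simp [hsym]
  simp_rw [Finset.sum_mul]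
  rw [lintegral_finsetSum _ fun j _ => by fun_prop]
  simp [hcoord]

theorem measurePreserving_fin_snoc {n : ℕ} :
    MeasurePreserving (fun z : (Fin n → X) × X => (Fin.snoc z.1 z.2 : Fin (n + 1) → X))
      ((Measure.pi fun _ => μ).prod μ) (Measure.pi fun _ => μ) := by
  convert
    (measurePreserving_piFinSuccAbove (fun _ : Fin (n + 1) => μ) (Fin.last n)).symm.comp
      (Measure.measurePreserving_swap (μ := Measure.pi fun _ : Fin n => μ) (ν := μ)) using 1
  ext z i
  simp [MeasurableEquiv.piFinSuccAbove]

theorem lintegral_pi_fin_succ_eq_lintegral_snoc {n : ℕ} {G : (Fin (n + 1) → X) → ℝ≥0∞}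
    (hG : Measurable G) :
    ∫⁻ k, G k ∂Measure.pi (fun _ => μ) =
      ∫⁻ k, ∫⁻ κ, G (Fin.snoc k κ) ∂μ ∂Measure.pi (fun _ : Fin n => μ) := by
  rw [← (measurePreserving_fin_snoc μ).lintegral_comp hG]
  exact lintegral_prod _ (hG.comp (measurePreserving_fin_snoc μ).measurable).aemeasurable

theorem card_mul_lintegral_rpow_eval_mul_le {ι : Type*} [Fintype ι] {ω : X → ℝ}
    (hω : Measurable ω) (hω0 : ∀ x, 0 ≤ ω x) {s : ℝ} (hs : 1 ≤ s) {Φ : (ι → X) → ℝ}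
    (hΦ : Measurable Φ) (hsym : ∀ (σ : Equiv.Perm ι) k, Φ (k ∘ σ) = Φ k) (i : ι) :
    Fintype.card ι * ∫⁻ k, ENNReal.ofReal (ω (k i) ^ s * Φ k) ∂Measure.pi (fun _ => μ) ≤
      ∫⁻ k, ENNReal.ofReal ((∑ j, ω (k j)) ^ s * Φ k) ∂Measure.pi (fun _ => μ) := by
  have hsplit : ∀ {x : ℝ}, 0 ≤ x → ∀ k,
      ENNReal.ofReal (x ^ s * Φ k) = ENNReal.ofReal x ^ s * ENNReal.ofReal (Φ k) :=
    fun hx k => by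
      rw [ENNReal.ofReal_mul (by positivity), ENNReal.ofReal_rpow_of_nonneg hx (by linarith)]
  have hsum : ∀ k : ι → X, 0 ≤ ∑ j, ω (k j) := fun k => Finset.sum_nonneg fun j _ => hω0 _
  simp only [hsplit (hω0 _), hsplit (hsum _)]
  rw [← lintegral_sum_eval_mul_of_perm_invariant μ (h := fun x => ENNReal.ofReal (ω x) ^ s)
    (by fun_prop) hΦ.ennreal_ofReal (fun σ k => by rw [hsym]) i]
  refine lintegral_mono fun k => ?_
  rw [ENNReal.ofReal_sum_of_nonneg fun j _ => hω0 _]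
  gcongr
  exact ENNReal.sum_rpow_le_rpow_sum _ _ hs

theorem succ_mul_lintegral_lintegral_snoc_rpow_mul_le {n : ℕ} {ω : X → ℝ} (hω : Measurable ω)
    (hω0 : ∀ x, 0 ≤ ω x) {s : ℝ} (hs : 1 ≤ s) {Φ : (Fin (n + 1) → X) → ℝ} (hΦ : Measurable Φ)
    (hsym : ∀ (σ : Equiv.Perm (Fin (n + 1))) k, Φ (k ∘ σ) = Φ k) :
    ((n : ℝ≥0∞) + 1) * ∫⁻ k, ∫⁻ κ, ENNReal.ofReal (ω κ ^ s * Φ (Fin.snoc k κ)) ∂μ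
        ∂Measure.pi (fun _ : Fin n => μ) ≤
      ∫⁻ k, ENNReal.ofReal ((∑ j, ω (k j)) ^ s * Φ k) ∂Measure.pi (fun _ => μ) := by
  have h := card_mul_lintegral_rpow_eval_mul_le μ hω hω0 hs hΦ hsym (Fin.last n)
  rw [lintegral_pi_fin_succ_eq_lintegral_snoc μ (by fun_prop)] at h
  simpa only [Fin.snoc_last, Fintype.card_fin, Nat.cast_add, Nat.cast_one] using h

end ProductMeasure

/-- (boundedness of the singular annihilation operator on the
`(n+1)`-particle sector, `n + 1 ≥ 1`). For `s ≥ 1`, `f ∈ H_{−s}` and a measurable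
symmetric `Ψ : X^(n+1) → ℂ` with `∫ (Σ_j ω(k_j))^s |Ψ|² dμ^(n+1) < ∞`:
for a.e. `(k_1,…,k_n)` the function `κ ↦ conj(f(κ))Ψ(k_1,…,k_n,κ)` is integrable, and
`(n+1)·∫ |∫ conj(f)Ψ(·,κ) dμ(κ)|² dμⁿ ≤ ‖f‖²_{−s} · ∫ (Σ_j ω(k_j))^s |Ψ|² dμ^(n+1)`. -/
theorem annihilation_bounded
    {X : Type*} [MeasurableSpace X] (μ : Measure X) [SigmaFinite μ]
    (ω : X → ℝ) (hω : Measurable ω) (m : ℝ) (hm : 0 < m) (hωm : ∀ k, m ≤ ω k)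
    (s : ℝ) (hs : 1 ≤ s)
    (f : X → ℂ) (hf : Measurable f)
    (hfs : (∫⁻ k, ENNReal.ofReal (ω k ^ (-s) * ‖f k‖ ^ 2) ∂μ) ≠ ⊤)
    (n : ℕ) (Ψ : (Fin (n + 1) → X) → ℂ) (hΨ : Measurable Ψ)
    (hsym : ∀ σ : Equiv.Perm (Fin (n + 1)), ∀ k : Fin (n + 1) → X, Ψ (k ∘ σ) = Ψ k)
    (hΨs : (∫⁻ k, ENNReal.ofReal ((∑ j : Fin (n + 1), ω (k j)) ^ s * ‖Ψ k‖ ^ 2)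
        ∂(Measure.pi fun _ : Fin (n + 1) => μ)) ≠ ⊤) :
    (∀ᵐ k ∂(Measure.pi fun _ : Fin n => μ),
      Integrable (fun κ => (starRingEnd ℂ) (f κ) * Ψ (Fin.snoc k κ)) μ) ∧
    ((n : ℝ≥0∞) + 1) *
        ∫⁻ k, ENNReal.ofReal (‖∫ κ, (starRingEnd ℂ) (f κ) * Ψ (Fin.snoc k κ) ∂μ‖ ^ 2)
          ∂(Measure.pi fun _ : Fin n => μ) ≤
      (∫⁻ k, ENNReal.ofReal (ω k ^ (-s) * ‖f k‖ ^ 2) ∂μ) *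
        ∫⁻ k, ENNReal.ofReal ((∑ j : Fin (n + 1), ω (k j)) ^ s * ‖Ψ k‖ ^ 2)
          ∂(Measure.pi fun _ : Fin (n + 1) => μ) := by
  have hω0 : ∀ κ, 0 < ω κ := fun κ => hm.trans_le (hωm κ)
  have hws_pos : ∀ κ, 0 < ω κ ^ s := fun κ => Real.rpow_pos_of_pos (hω0 κ) s
  simp only [Real.rpow_neg (hω0 _).le] at hfs ⊢
  set A := ∫⁻ κ, ENNReal.ofReal ((ω κ ^ s)⁻¹ * ‖f κ‖ ^ 2) ∂μ
  set B : (Fin n → X) → ℝ≥0∞ :=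
    fun k => ∫⁻ κ, ENNReal.ofReal (ω κ ^ s * ‖Ψ (Fin.snoc k κ)‖ ^ 2) ∂μ
  have hsnoc := (measurePreserving_fin_snoc (n := n) μ).measurable
  have hΨk (k : Fin n → X) : AEStronglyMeasurable (fun κ => Ψ (Fin.snoc k κ)) μ :=
    (hΨ.comp (hsnoc.comp measurable_prodMk_left)).aestronglyMeasurable
  have hB : Measurable B := Measurable.lintegral_prod_right'
    (f := fun z => ENNReal.ofReal (ω z.2 ^ s * ‖Ψ (Fin.snoc z.1 z.2)‖ ^ 2)) (by fun_prop)
  have hBC := succ_mul_lintegral_lintegral_snoc_rpow_mul_le μ hω (fun x => (hω0 x).le) hs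
    (Φ := fun k => ‖Ψ k‖ ^ 2) (by fun_prop) (fun σ k => by simp only [hsym])
  refine ⟨?_, ?_⟩
  · have hB_fin : ∫⁻ k, B k ∂(Measure.pi fun _ : Fin n => μ) ≠ ∞ :=
      ne_top_of_le_ne_top hΨs ((le_mul_of_one_le_left' le_add_self).trans hBC)
    filter_upwards [ae_lt_top hB hB_fin] with k hk
    exact integrable_conj_mul_of_lintegral_weighted_ne_top (hω.pow_const s) hws_pos
      hf.aestronglyMeasurable (hΨk k) hfs hk.ne
  · calc _ ≤ ((n : ℝ≥0∞) + 1) * ∫⁻ k, A * B k ∂(Measure.pi fun _ : Fin n => μ) := by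
          gcongr with k
          exact ofReal_norm_integral_conj_mul_sq_le (hω.pow_const s) hws_pos
            hf.aestronglyMeasurable (hΨk k)
      _ = A * (((n : ℝ≥0∞) + 1) * ∫⁻ k, B k ∂(Measure.pi fun _ : Fin n => μ)) := by
          rw [lintegral_const_mul' _ _ hfs]
          ring
      _ ≤ _ := by gcongr
end

section
/- Let s ≥ 1, let f : X → ℂ be measurable with ‖f‖_{−s}² := ∫_X ω^{−s}|f|² dμ < ∞, let n ≥ 0, and let Ψ : Xⁿ → ℂ be measurable, symmetric, and square-integrable with respect to μⁿ. Define Φ : X^{n+1} → ℂ by Φ(k_1,…,k_{n+1}) = Σ_{j=1}^{n+1} f(k_j) Ψ(k_1,…,k̂_j,…,k_{n+1}), where k̂_j means the j-th variable is omitted. Then ∫_{X^{n+1}} (1 + Σ_{j=1}^{n+1} ω(k_j))^{−s} |Φ|² dμ^{n+1} ≤ (n+1) · ‖f‖_{−s}² · ∫_{Xⁿ} |Ψ|² dμⁿ. (This is the n-particle-sector content of the boundedness of the singular creation operator a†(f) : F → F_{−s}, with operator norm at most ‖f‖_{−s}, since a†(f)Ψ = (n+1)^{−1/2}Φ.) 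-/
open MeasureTheory ENNReal

/-- Pointwise weighted Cauchy–Schwarz bound. -/
lemma pointwise_cs {n : ℕ} {s : ℝ} (hs : 1 ≤ s)
    (a c d : Fin (n + 1) → ℝ) (ha : ∀ j, 0 < a j)
    (hc : ∀ j, 0 ≤ c j) (hd : ∀ j, 0 ≤ d j) :
    (1 + ∑ j, a j) ^ (-s) * (∑ j, c j * d j) ^ 2 ≤
      ∑ j, a j ^ (-s) * (c j ^ 2 * d j ^ 2) := by
  set w : ℝ := 1 + ∑ j, a j with hw
  have hsum : (0:ℝ) ≤ ∑ j, a j := Finset.sum_nonneg fun j _ => (ha j).le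
  have hw1 : (1:ℝ) ≤ w := by rw [hw]; linarith
  have hwpos : (0:ℝ) < w := lt_of_lt_of_le one_pos hw1
  have haw : ∀ j, a j ≤ w := by
    intro j
    have := Finset.single_le_sum (f := a) (fun i _ => (ha i).le) (Finset.mem_univ j)
    rw [hw]; linarith
  -- `∑ a_j ^ s ≤ w ^ s`
  have hpow : (∑ j, a j ^ s) ≤ w ^ s := by
    have step : ∀ j : Fin (n+1), a j ^ s ≤ a j * w ^ (s - 1) := by
      intro j
      calc a j ^ s = a j ^ ((1:ℝ) + (s - 1)) := by ring_nf
        _ = a j ^ (1:ℝ) * a j ^ (s - 1) := Real.rpow_add (ha j) _ _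
        _ = a j * a j ^ (s - 1) := by rw [Real.rpow_one]
        _ ≤ a j * w ^ (s - 1) :=
            mul_le_mul_of_nonneg_left
              (Real.rpow_le_rpow (ha j).le (haw j) (by linarith)) (ha j).le
    calc (∑ j, a j ^ s) ≤ ∑ j, a j * w ^ (s - 1) := Finset.sum_le_sum fun j _ => step j
      _ = (∑ j, a j) * w ^ (s - 1) := by rw [Finset.sum_mul]
      _ ≤ w * w ^ (s - 1) := by
          have : (∑ j, a j) ≤ w := by rw [hw]; linarith
          exact mul_le_mul_of_nonneg_right this (Real.rpow_nonneg hwpos.le _)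
      _ = w ^ ((1:ℝ) + (s - 1)) := by rw [Real.rpow_add hwpos, Real.rpow_one]
      _ = w ^ s := by ring_nf
  -- Cauchy–Schwarz
  have hcs : (∑ j, c j * d j) ^ 2 ≤
      (∑ j, a j ^ s) * (∑ j, a j ^ (-s) * (c j ^ 2 * d j ^ 2)) := by
    have hrw : (∑ j, c j * d j) =
        ∑ j, (a j ^ (s / 2)) * (a j ^ (-(s / 2)) * (c j * d j)) := by
      refine Finset.sum_congr rfl fun j _ => ?_
      rw [← mul_assoc, ← Real.rpow_add (ha j)]
      simp
    rw [hrw]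
    have := Finset.sum_mul_sq_le_sq_mul_sq Finset.univ
      (fun j => a j ^ (s / 2)) (fun j => a j ^ (-(s / 2)) * (c j * d j))
    refine this.trans_eq ?_
    congr 1
    · refine Finset.sum_congr rfl fun j _ => ?_
      rw [sq, ← Real.rpow_add (ha j)]
      ring_nf
    · refine Finset.sum_congr rfl fun j _ => ?_
      rw [mul_pow, sq (a j ^ (-(s/2))), ← Real.rpow_add (ha j)]
      ring_nf
  have hsumnn : (0:ℝ) ≤ ∑ j, a j ^ (-s) * (c j ^ 2 * d j ^ 2) :=
    Finset.sum_nonneg fun j _ =>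
      mul_nonneg (Real.rpow_nonneg (ha j).le _) (by positivity)
  calc w ^ (-s) * (∑ j, c j * d j) ^ 2
      ≤ w ^ (-s) * ((∑ j, a j ^ s) * (∑ j, a j ^ (-s) * (c j ^ 2 * d j ^ 2))) :=
        mul_le_mul_of_nonneg_left hcs (Real.rpow_nonneg hwpos.le _)
    _ ≤ w ^ (-s) * (w ^ s * (∑ j, a j ^ (-s) * (c j ^ 2 * d j ^ 2))) := by
        apply mul_le_mul_of_nonneg_left _ (Real.rpow_nonneg hwpos.le _)
        exact mul_le_mul_of_nonneg_right hpow hsumnn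
    _ = (w ^ (-s) * w ^ s) * (∑ j, a j ^ (-s) * (c j ^ 2 * d j ^ 2)) := by ring
    _ = ∑ j, a j ^ (-s) * (c j ^ 2 * d j ^ 2) := by
        rw [← Real.rpow_add hwpos]
        simp

/-- (boundedness of the singular creation operator on the `n`-particle
sector). For `s ≥ 1`, `f ∈ H_{−s}`, and a measurable symmetric square-integrable
`Ψ : Xⁿ → ℂ`, setting `Φ(k_1,…,k_{n+1}) = Σ_j f(k_j) Ψ(k_1,…,k̂_j,…,k_{n+1})`
(the `j`-th variable omitted), one has
`∫ (1 + Σ_j ω(k_j))^(−s) |Φ|² dμ^(n+1) ≤ (n+1)·‖f‖²_{−s}·∫ |Ψ|² dμⁿ`. -/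
theorem creation_bounded
    {X : Type*} [MeasurableSpace X] (μ : Measure X) [SigmaFinite μ]
    (ω : X → ℝ) (hω : Measurable ω) (m : ℝ) (hm : 0 < m) (hωm : ∀ k, m ≤ ω k)
    (s : ℝ) (hs : 1 ≤ s)
    (f : X → ℂ) (hf : Measurable f)
    (hfs : (∫⁻ k, ENNReal.ofReal (ω k ^ (-s) * ‖f k‖ ^ 2) ∂μ) ≠ ⊤)
    (n : ℕ) (Ψ : (Fin n → X) → ℂ) (hΨ : Measurable Ψ)
    (hsym : ∀ σ : Equiv.Perm (Fin n), ∀ k : Fin n → X, Ψ (k ∘ σ) = Ψ k)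
    (hΨ2 : (∫⁻ k, ENNReal.ofReal (‖Ψ k‖ ^ 2) ∂(Measure.pi fun _ : Fin n => μ)) ≠ ⊤) :
    ∫⁻ k, ENNReal.ofReal ((1 + ∑ j : Fin (n + 1), ω (k j)) ^ (-s) *
        ‖∑ j : Fin (n + 1), f (k j) * Ψ (fun i => k (j.succAbove i))‖ ^ 2)
      ∂(Measure.pi fun _ : Fin (n + 1) => μ) ≤
    ((n : ℝ≥0∞) + 1) * (∫⁻ k, ENNReal.ofReal (ω k ^ (-s) * ‖f k‖ ^ 2) ∂μ) *
      ∫⁻ k, ENNReal.ofReal (‖Ψ k‖ ^ 2) ∂(Measure.pi fun _ : Fin n => μ) := by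
  classical
  have hωpos : ∀ x, 0 < ω x := fun x => lt_of_lt_of_le hm (hωm x)
  set G : X → ℝ≥0∞ := fun x => ENNReal.ofReal (ω x ^ (-s) * ‖f x‖ ^ 2) with hGdef
  set H : (Fin n → X) → ℝ≥0∞ := fun y => ENNReal.ofReal (‖Ψ y‖ ^ 2) with hHdef
  -- pointwise bound
  have hpt : ∀ k : Fin (n + 1) → X,
      ENNReal.ofReal ((1 + ∑ j : Fin (n + 1), ω (k j)) ^ (-s) *
        ‖∑ j : Fin (n + 1), f (k j) * Ψ (fun i => k (j.succAbove i))‖ ^ 2) ≤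
      ∑ j : Fin (n + 1), ENNReal.ofReal (ω (k j) ^ (-s) *
        (‖f (k j)‖ ^ 2 * ‖Ψ (fun i => k (j.succAbove i))‖ ^ 2)) := by
    intro k
    rw [← ENNReal.ofReal_sum_of_nonneg (fun j _ =>
      mul_nonneg (Real.rpow_nonneg (hωpos _).le _) (by positivity))]
    apply ENNReal.ofReal_le_ofReal
    have hnorm : ‖∑ j : Fin (n + 1), f (k j) * Ψ (fun i => k (j.succAbove i))‖ ≤
        ∑ j : Fin (n + 1), ‖f (k j)‖ * ‖Ψ (fun i => k (j.succAbove i))‖ := by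
      refine (norm_sum_le _ _).trans (le_of_eq ?_)
      exact Finset.sum_congr rfl fun j _ => norm_mul _ _
    have hsq : ‖∑ j : Fin (n + 1), f (k j) * Ψ (fun i => k (j.succAbove i))‖ ^ 2 ≤
        (∑ j : Fin (n + 1), ‖f (k j)‖ * ‖Ψ (fun i => k (j.succAbove i))‖) ^ 2 :=
      pow_le_pow_left₀ (norm_nonneg _) hnorm 2
    have h1 : (1 + ∑ j : Fin (n + 1), ω (k j)) ^ (-s) *
        ‖∑ j : Fin (n + 1), f (k j) * Ψ (fun i => k (j.succAbove i))‖ ^ 2 ≤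
        (1 + ∑ j : Fin (n + 1), ω (k j)) ^ (-s) *
        (∑ j : Fin (n + 1), ‖f (k j)‖ * ‖Ψ (fun i => k (j.succAbove i))‖) ^ 2 :=
      mul_le_mul_of_nonneg_left hsq (Real.rpow_nonneg
        (by have : (0:ℝ) ≤ ∑ j : Fin (n+1), ω (k j) :=
              Finset.sum_nonneg fun j _ => (hωpos _).le
            linarith) _)
    refine h1.trans ?_
    exact pointwise_cs hs (fun j => ω (k j)) (fun j => ‖f (k j)‖)
      (fun j => ‖Ψ (fun i => k (j.succAbove i))‖) (fun j => hωpos _)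
      (fun j => norm_nonneg _) (fun j => norm_nonneg _)
  refine le_trans (lintegral_mono hpt) ?_
  -- measurability of each summand
  have hrpow : Measurable fun x => ω x ^ (-s) := by
    have he : (fun x => ω x ^ (-s)) = fun x => Real.exp (Real.log (ω x) * (-s)) :=
      funext fun x => Real.rpow_def_of_pos (hωpos x) _
    rw [he]
    exact Real.measurable_exp.comp ((Real.measurable_log.comp hω).mul_const _)
  have hmeas : ∀ j : Fin (n + 1), Measurable (fun k : Fin (n + 1) → X =>
      ENNReal.ofReal (ω (k j) ^ (-s) *
        (‖f (k j)‖ ^ 2 * ‖Ψ (fun i => k (j.succAbove i))‖ ^ 2))) := by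
    intro j
    have h1 : Measurable fun k : Fin (n + 1) → X => ω (k j) ^ (-s) :=
      hrpow.comp (measurable_pi_apply j)
    have h2 : Measurable fun k : Fin (n + 1) → X => ‖f (k j)‖ ^ 2 :=
      ((hf.comp (measurable_pi_apply j)).norm).pow_const 2
    have h3 : Measurable fun k : Fin (n + 1) → X =>
        ‖Ψ (fun i => k (j.succAbove i))‖ ^ 2 := by
      have : Measurable fun k : Fin (n + 1) → X => (fun i => k (j.succAbove i)) :=
        measurable_pi_iff.2 fun i => measurable_pi_apply _
      exact ((hΨ.comp this).norm).pow_const 2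
    exact (h1.mul (h2.mul h3)).ennreal_ofReal
  rw [lintegral_finset_sum _ fun j _ => hmeas j]
  -- each summand integrates to the product of the two integrals
  have hterm : ∀ j : Fin (n + 1),
      ∫⁻ k, ENNReal.ofReal (ω (k j) ^ (-s) *
          (‖f (k j)‖ ^ 2 * ‖Ψ (fun i => k (j.succAbove i))‖ ^ 2))
        ∂(Measure.pi fun _ : Fin (n + 1) => μ) =
      (∫⁻ x, G x ∂μ) * ∫⁻ y, H y ∂(Measure.pi fun _ : Fin n => μ) := by
    intro j
    have hpres := measurePreserving_piFinSuccAbove (fun _ : Fin (n + 1) => μ) j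
    have hGm : Measurable G := (hrpow.mul (hf.norm.pow_const 2)).ennreal_ofReal
    have hHm : Measurable H := (hΨ.norm.pow_const 2).ennreal_ofReal
    calc ∫⁻ k, ENNReal.ofReal (ω (k j) ^ (-s) *
            (‖f (k j)‖ ^ 2 * ‖Ψ (fun i => k (j.succAbove i))‖ ^ 2))
          ∂(Measure.pi fun _ : Fin (n + 1) => μ)
        = ∫⁻ k, G (k j) * H (fun i => k (j.succAbove i))
            ∂(Measure.pi fun _ : Fin (n + 1) => μ) := by
          refine lintegral_congr fun k => ?_
          rw [hGdef, hHdef]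
          rw [← ENNReal.ofReal_mul
            (mul_nonneg (Real.rpow_nonneg (hωpos _).le _) (by positivity))]
          congr 1
          ring
      _ = ∫⁻ p : X × (Fin n → X), G p.1 * H p.2
            ∂(μ.prod (Measure.pi fun _ : Fin n => μ)) := by
          rw [hpres.lintegral_map_equiv (f := fun p : X × (Fin n → X) => G p.1 * H p.2)]
          rfl
      _ = (∫⁻ x, G x ∂μ) * ∫⁻ y, H y ∂(Measure.pi fun _ : Fin n => μ) :=
          lintegral_prod_mul hGm.aemeasurable hHm.aemeasurable
  simp only [hterm, Finset.sum_const, Finset.card_univ, Fintype.card_fin, nsmul_eq_mul]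
  push_cast
  ring_nf
  exact le_refl _
end

section
/- Let s ≥ 1, let f : X → ℂ be measurable with ∫_X ω^{−s}|f|² dμ < ∞, let n ≥ 0, let Ψ : Xⁿ → ℂ be measurable, symmetric, and square-integrable with respect to μⁿ, and let Ξ : X^{n+1} → ℂ be measurable and symmetric with ∫_{X^{n+1}} (1 + Σ_{j=1}^{n+1} ω(k_j))^{s} |Ξ|² dμ^{n+1} < ∞. With Φ(k_1,…,k_{n+1}) = Σ_{j=1}^{n+1} f(k_j) Ψ(k_1,…,k̂_j,…,k_{n+1}) (the j-th variable omitted), the function conj(Φ)·Ξ is μ^{n+1}-integrable and ∫_{X^{n+1}} conj(Φ(k)) Ξ(k) dμ^{n+1}(k) = (n+1) ∫_{Xⁿ} conj(Ψ(k_1,…,k_n)) (∫_X conj(f(κ)) Ξ(k_1,…,k_n,κ) dμ(κ)) dμⁿ. (This identity expresses that the creation operator a†(f) is the adjoint of the annihilation operator a(f) with respect to the duality pairing of the Fock scale.) -/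
/-!
Expanding `conj Φ`, the `j`-th summand of `conj Φ · Ξ` is carried by the measure-preserving
map `(κ, k) ↦ insertNth j κ k : X × Xⁿ → X^(n+1)` to `conj (f κ Ψ k) Ξ (k, κ)`, the same
function for every `j` because `Ξ` is symmetric; Fubini then gives `n + 1` times the
right-hand side. Integrability is Cauchy–Schwarz after splitting the weight,
`|f| |Ψ| |Ξ| = (ω^{-s/2} |f| |Ψ|) (ω^{s/2} |Ξ|)`: the first factor is in `L²` by the
hypotheses on `f` and `Ψ`, the second because `ω κ ≤ 1 + ∑ ω` and `s ≥ 0`.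
-/

open MeasureTheory ENNReal

theorem Fin.apply_insertNth_eq_apply_snoc {α β : Type*} {n : ℕ} {F : (Fin (n + 1) → α) → β}
    (hF : ∀ (σ : Equiv.Perm (Fin (n + 1))) (k : Fin (n + 1) → α), F (k ∘ σ) = F k)
    (j : Fin (n + 1)) (x : α) (y : Fin n → α) :
    F (j.insertNth x y) = F (Fin.snoc y x) := by
  let σ : Equiv.Perm (Fin (n + 1)) :=
    (finSuccEquiv' j).trans (finSuccEquiv' (Fin.last n)).symm
  have hσ : (Fin.snoc y x : Fin (n + 1) → α) ∘ σ = j.insertNth x y := by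
    funext i
    induction i using j.succAboveCases with
    | x => simp [σ, finSuccEquiv'_symm_none]
    | p l => simp [σ, finSuccEquiv'_symm_some, Fin.succAbove_last]
  rw [← hσ, hF]

section InsertNth

variable {X E : Type*} [MeasurableSpace X] {n : ℕ} [NormedAddCommGroup E]

theorem measurable_insertNth (j : Fin (n + 1)) :
    Measurable fun p : X × (Fin n → X) => (j.insertNth p.1 p.2 : Fin (n + 1) → X) :=
  (MeasurableEquiv.piFinSuccAbove (fun _ => X) j).symm.measurable

theorem measurePreserving_insertNth (μ : Measure X) [SigmaFinite μ] (j : Fin (n + 1)) :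
    MeasurePreserving (fun p : X × (Fin n → X) => j.insertNth p.1 p.2)
      (μ.prod (Measure.pi fun _ => μ)) (Measure.pi fun _ => μ) :=
  (measurePreserving_piFinSuccAbove (fun _ => μ) j).symm _

theorem integrable_comp_insertNth_iff {μ : Measure X} [SigmaFinite μ] (j : Fin (n + 1))
    {G : (Fin (n + 1) → X) → E} :
    Integrable (fun p : X × (Fin n → X) => G (j.insertNth p.1 p.2))
      (μ.prod (Measure.pi fun _ => μ)) ↔ Integrable G (Measure.pi fun _ => μ) :=
  (measurePreserving_insertNth μ j).integrable_comp_emb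
    (MeasurableEquiv.piFinSuccAbove (fun _ => X) j).symm.measurableEmbedding

theorem integral_comp_insertNth [NormedSpace ℝ E] {μ : Measure X} [SigmaFinite μ]
    (j : Fin (n + 1)) (G : (Fin (n + 1) → X) → E) :
    ∫ p, G (j.insertNth p.1 p.2) ∂(μ.prod (Measure.pi fun _ => μ)) =
      ∫ k, G k ∂(Measure.pi fun _ => μ) :=
  (measurePreserving_insertNth μ j).integral_comp
    (MeasurableEquiv.piFinSuccAbove (fun _ => X) j).symm.measurableEmbedding G

end InsertNth

theorem Real.rpow_div_two_mul_sq {w : ℝ} (hw : 0 ≤ w) (r t : ℝ) :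
    (w ^ (r / 2) * t) ^ 2 = w ^ r * t ^ 2 := by
  rw [mul_pow, ← Real.rpow_natCast, ← Real.rpow_mul hw]
  norm_num

section L2

variable {α β : Type*} [MeasurableSpace α] [MeasurableSpace β]
  {μ : Measure α} {ν : Measure β}

theorem memLp_two_of_lintegral_sq_ne_top {g : α → ℝ} (hg : AEStronglyMeasurable g μ)
    (h : ∫⁻ x, ENNReal.ofReal (g x ^ 2) ∂μ ≠ ⊤) : MemLp g 2 μ :=
  (memLp_two_iff_integrable_sq hg).2 <|
    (lintegral_ofReal_ne_top_iff_integrable (hg.pow 2) (ae_of_all _ fun _ => sq_nonneg _)).1 h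

theorem MeasureTheory.MemLp.mul_prod_of_two [SFinite ν] {a : α → ℝ} {b : β → ℝ}
    (ha : MemLp a 2 μ) (hb : MemLp b 2 ν) :
    MemLp (fun p : α × β => a p.1 * b p.2) 2 (μ.prod ν) :=
  (memLp_two_iff_integrable_sq (ha.1.comp_fst.mul hb.1.comp_snd)).2 <| by
    simpa only [Pi.mul_apply, mul_pow] using ha.integrable_sq.mul_prod hb.integrable_sq

end L2

section Weighted

variable {X : Type*} [MeasurableSpace X] {μ : Measure X} [SigmaFinite μ] {ω : X → ℝ} {s : ℝ}
  {n : ℕ}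

theorem memLp_rpow_mul_norm_snoc (hω : Measurable ω) (hω_nonneg : ∀ k, 0 ≤ ω k)
    (hs : 0 ≤ s)
    {Ξ : (Fin (n + 1) → X) → ℂ} (hΞ : Measurable Ξ)
    (hΞs : (∫⁻ k, ENNReal.ofReal ((1 + ∑ j : Fin (n + 1), ω (k j)) ^ s * ‖Ξ k‖ ^ 2)
        ∂(Measure.pi fun _ : Fin (n + 1) => μ)) ≠ ⊤) :
    MemLp (fun p : X × (Fin n → X) => ω p.1 ^ (s / 2) * ‖Ξ (Fin.snoc p.2 p.1)‖) 2
      (μ.prod (Measure.pi fun _ => μ)) := by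
  have h_meas : Measurable fun p : X × (Fin n → X) =>
      ω p.1 ^ (s / 2) * ‖Ξ (Fin.snoc p.2 p.1)‖ := by
    have hΞ_snoc := hΞ.comp (measurable_insertNth (Fin.last n))
    simp only [Function.comp_def, Fin.insertNth_last'] at hΞ_snoc
    exact ((hω.pow_const _).comp measurable_fst).mul hΞ_snoc.norm
  have h_sum_nonneg (k : Fin (n + 1) → X) : 0 ≤ 1 + ∑ j, ω (k j) :=
    add_nonneg zero_le_one (Finset.sum_nonneg fun j _ => hω_nonneg (k j))
  have hΞs_int : Integrable (fun k => (1 + ∑ j : Fin (n + 1), ω (k j)) ^ s * ‖Ξ k‖ ^ 2)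
      (Measure.pi fun _ => μ) :=
    (lintegral_ofReal_ne_top_iff_integrable (by fun_prop)
      (ae_of_all _ fun k => by have := h_sum_nonneg k; positivity)).1 hΞs
  refine (memLp_two_iff_integrable_sq h_meas.aestronglyMeasurable).2 <|
    ((integrable_comp_insertNth_iff (Fin.last n)).2 hΞs_int).mono'
      (h_meas.pow_const 2).aestronglyMeasurable (ae_of_all _ fun p => ?_)
  have hω_le : ω p.1 ≤ 1 + ∑ j, ω ((Fin.snoc p.2 p.1 : Fin (n + 1) → X) j) := by
    have := Finset.sum_nonneg fun i (_ : i ∈ Finset.univ) => hω_nonneg (p.2 i)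
    simp only [Fin.sum_univ_castSucc, Fin.snoc_castSucc, Fin.snoc_last]
    linarith
  rw [Real.norm_of_nonneg (sq_nonneg _), Real.rpow_div_two_mul_sq (hω_nonneg _),
    Fin.insertNth_last']
  exact mul_le_mul_of_nonneg_right (Real.rpow_le_rpow (hω_nonneg _) hω_le hs) (sq_nonneg _)

theorem integrable_conj_mul_snoc (hω : Measurable ω) (hω_pos : ∀ k, 0 < ω k) (hs : 0 ≤ s)
    {f : X → ℂ} (hf : Measurable f)
    (hfs : (∫⁻ k, ENNReal.ofReal (ω k ^ (-s) * ‖f k‖ ^ 2) ∂μ) ≠ ⊤)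
    {Ψ : (Fin n → X) → ℂ} (hΨ : Measurable Ψ)
    (hΨ2 : (∫⁻ k, ENNReal.ofReal (‖Ψ k‖ ^ 2) ∂(Measure.pi fun _ : Fin n => μ)) ≠ ⊤)
    {Ξ : (Fin (n + 1) → X) → ℂ} (hΞ : Measurable Ξ)
    (hΞs : (∫⁻ k, ENNReal.ofReal ((1 + ∑ j : Fin (n + 1), ω (k j)) ^ s * ‖Ξ k‖ ^ 2)
        ∂(Measure.pi fun _ : Fin (n + 1) => μ)) ≠ ⊤) :
    Integrable
      (fun p : X × (Fin n → X) => (starRingEnd ℂ) (f p.1 * Ψ p.2) * Ξ (Fin.snoc p.2 p.1))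
      (μ.prod (Measure.pi fun _ => μ)) := by
  have hf_weighted : MemLp (fun x => ω x ^ (-s / 2) * ‖f x‖) 2 μ :=
    memLp_two_of_lintegral_sq_ne_top ((hω.pow_const _).mul hf.norm).aestronglyMeasurable <|
      by
      simpa only [Real.rpow_div_two_mul_sq (hω_pos _).le] using hfs
  have hΨ_L2 : MemLp (fun y => ‖Ψ y‖) 2 (Measure.pi fun _ : Fin n => μ) :=
    memLp_two_of_lintegral_sq_ne_top hΨ.norm.aestronglyMeasurable hΨ2
  have hΞ_snoc : Measurable fun p : X × (Fin n → X) => Ξ (Fin.snoc p.2 p.1) := by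
    simpa only [Function.comp_def, Fin.insertNth_last'] using
      hΞ.comp (measurable_insertNth (Fin.last n))
  refine ((hf_weighted.mul_prod_of_two hΨ_L2).integrable_mul
      (memLp_rpow_mul_norm_snoc hω (fun k => (hω_pos k).le) hs hΞ hΞs)).mono'
    ((Complex.continuous_conj.measurable.comp ((hf.comp measurable_fst).mul
      (hΨ.comp measurable_snd))).mul hΞ_snoc).aestronglyMeasurable <|
    ae_of_all _ fun p => le_of_eq ?_
  have hcancel : ω p.1 ^ (-s / 2) * ω p.1 ^ (s / 2) = 1 := by
    rw [← Real.rpow_add (hω_pos _)]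
    simp [neg_div]
  simp only [norm_mul, RCLike.norm_conj, Pi.mul_apply]
  linear_combination (-(‖f p.1‖ * ‖Ψ p.2‖ * ‖Ξ (Fin.snoc p.2 p.1)‖)) * hcancel

end Weighted

theorem creation_adjoint_annihilation_general
    {X : Type*} [MeasurableSpace X] (μ : Measure X) [SigmaFinite μ]
    (ω : X → ℝ) (hω : Measurable ω) (m : ℝ) (hm : 0 < m) (hωm : ∀ k, m ≤ ω k)
    (s : ℝ) (hs : 1 ≤ s)
    (f : X → ℂ) (hf : Measurable f)
    (hfs : (∫⁻ k, ENNReal.ofReal (ω k ^ (-s) * ‖f k‖ ^ 2) ∂μ) ≠ ⊤)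
    (n : ℕ) (Ψ : (Fin n → X) → ℂ) (hΨ : Measurable Ψ)
    (hΨ2 : (∫⁻ k, ENNReal.ofReal (‖Ψ k‖ ^ 2) ∂(Measure.pi fun _ : Fin n => μ)) ≠ ⊤)
    (Ξ : (Fin (n + 1) → X) → ℂ) (hΞ : Measurable Ξ)
    (hsymΞ : ∀ σ : Equiv.Perm (Fin (n + 1)), ∀ k : Fin (n + 1) → X, Ξ (k ∘ σ) = Ξ k)
    (hΞs : (∫⁻ k, ENNReal.ofReal ((1 + ∑ j : Fin (n + 1), ω (k j)) ^ s * ‖Ξ k‖ ^ 2)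
        ∂(Measure.pi fun _ : Fin (n + 1) => μ)) ≠ ⊤) :
    Integrable
      (fun k => (starRingEnd ℂ) (∑ j : Fin (n + 1), f (k j) * Ψ (fun i => k (j.succAbove i)))
        * Ξ k) (Measure.pi fun _ : Fin (n + 1) => μ) ∧
    ∫ k, (starRingEnd ℂ) (∑ j : Fin (n + 1), f (k j) * Ψ (fun i => k (j.succAbove i))) * Ξ k
        ∂(Measure.pi fun _ : Fin (n + 1) => μ) =
      ((n : ℂ) + 1) *
        ∫ k, (starRingEnd ℂ) (Ψ k) * (∫ κ, (starRingEnd ℂ) (f κ) * Ξ (Fin.snoc k κ) ∂μ)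
          ∂(Measure.pi fun _ : Fin n => μ) := by
  set g : Fin (n + 1) → (Fin (n + 1) → X) → ℂ :=
    fun j k => (starRingEnd ℂ) (f (k j) * Ψ (fun i => k (j.succAbove i))) * Ξ k
  set h : X × (Fin n → X) → ℂ :=
    fun p => (starRingEnd ℂ) (f p.1 * Ψ p.2) * Ξ (Fin.snoc p.2 p.1)
  have hh : Integrable h (μ.prod (Measure.pi fun _ => μ)) :=
    integrable_conj_mul_snoc hω (fun k => hm.trans_le (hωm k)) (by linarith) hf hfs hΨ hΨ2 hΞ hΞs
  have hg_insertNth (j : Fin (n + 1)) :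
      (fun p : X × (Fin n → X) => g j (j.insertNth p.1 p.2)) = h :=
    funext fun p => by
      simp only [g, h, Fin.insertNth_apply_same, Fin.insertNth_apply_succAbove,
        Fin.apply_insertNth_eq_apply_snoc hsymΞ]
  have hg_int (j : Fin (n + 1)) : Integrable (g j) (Measure.pi fun _ => μ) :=
    (integrable_comp_insertNth_iff j).1 (hg_insertNth j ▸ hh)
  have hg_integral (j : Fin (n + 1)) :
      ∫ k, g j k ∂(Measure.pi fun _ => μ) = ∫ p, h p ∂(μ.prod (Measure.pi fun _ => μ)) := by
    rw [← integral_comp_insertNth j, hg_insertNth]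
  have hh_fubini : ∫ p, h p ∂(μ.prod (Measure.pi fun _ => μ)) =
      ∫ y, (starRingEnd ℂ) (Ψ y) * (∫ κ, (starRingEnd ℂ) (f κ) * Ξ (Fin.snoc y κ) ∂μ)
        ∂(Measure.pi fun _ : Fin n => μ) := by
    rw [integral_prod_symm _ hh]
    refine integral_congr_ae (ae_of_all _ fun y => ?_)
    simp only [h, map_mul, ← integral_const_mul, mul_left_comm, mul_assoc]
  have hexpand : (fun k => (starRingEnd ℂ)
      (∑ j : Fin (n + 1), f (k j) * Ψ (fun i => k (j.succAbove i))) * Ξ k) =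
        fun k => ∑ j, g j k := by
    simp only [g, map_sum, Finset.sum_mul]
  refine ⟨hexpand ▸ integrable_finsetSum _ fun j _ => hg_int j, ?_⟩
  rw [hexpand, integral_finsetSum _ fun j _ => hg_int j,
    Finset.sum_congr rfl fun j _ => hg_integral j, hh_fubini, Finset.sum_const, Finset.card_univ,
    Fintype.card_fin, nsmul_eq_mul]
  push_cast
  rfl

/-- (the creation operator is the adjoint of the annihilation operator
with respect to the duality pairing of the Fock scale). With
`Φ(k_1,…,k_{n+1}) = Σ_j f(k_j) Ψ(…,k̂_j,…)` for a symmetric square-integrable `Ψ`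
on `Xⁿ`, and a symmetric `Ξ` on `X^(n+1)` with `∫ (1+Σω)^s |Ξ|² < ∞`, the function
`conj(Φ)·Ξ` is integrable and
`∫ conj(Φ)Ξ dμ^(n+1) = (n+1) ∫ conj(Ψ(k)) (∫ conj(f(κ)) Ξ(k,κ) dμ(κ)) dμⁿ`. -/
theorem creation_adjoint_annihilation
    {X : Type*} [MeasurableSpace X] (μ : Measure X) [SigmaFinite μ]
    (ω : X → ℝ) (hω : Measurable ω) (m : ℝ) (hm : 0 < m) (hωm : ∀ k, m ≤ ω k)
    (s : ℝ) (hs : 1 ≤ s)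
    (f : X → ℂ) (hf : Measurable f)
    (hfs : (∫⁻ k, ENNReal.ofReal (ω k ^ (-s) * ‖f k‖ ^ 2) ∂μ) ≠ ⊤)
    (n : ℕ) (Ψ : (Fin n → X) → ℂ) (hΨ : Measurable Ψ)
    (hsymΨ : ∀ σ : Equiv.Perm (Fin n), ∀ k : Fin n → X, Ψ (k ∘ σ) = Ψ k)
    (hΨ2 : (∫⁻ k, ENNReal.ofReal (‖Ψ k‖ ^ 2) ∂(Measure.pi fun _ : Fin n => μ)) ≠ ⊤)
    (Ξ : (Fin (n + 1) → X) → ℂ) (hΞ : Measurable Ξ)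
    (hsymΞ : ∀ σ : Equiv.Perm (Fin (n + 1)), ∀ k : Fin (n + 1) → X, Ξ (k ∘ σ) = Ξ k)
    (hΞs : (∫⁻ k, ENNReal.ofReal ((1 + ∑ j : Fin (n + 1), ω (k j)) ^ s * ‖Ξ k‖ ^ 2)
        ∂(Measure.pi fun _ : Fin (n + 1) => μ)) ≠ ⊤) :
    Integrable
      (fun k => (starRingEnd ℂ) (∑ j : Fin (n + 1), f (k j) * Ψ (fun i => k (j.succAbove i)))
        * Ξ k) (Measure.pi fun _ : Fin (n + 1) => μ) ∧
    ∫ k, (starRingEnd ℂ) (∑ j : Fin (n + 1), f (k j) * Ψ (fun i => k (j.succAbove i))) * Ξ k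
        ∂(Measure.pi fun _ : Fin (n + 1) => μ) =
      ((n : ℂ) + 1) *
        ∫ k, (starRingEnd ℂ) (Ψ k) * (∫ κ, (starRingEnd ℂ) (f κ) * Ξ (Fin.snoc k κ) ∂μ)
          ∂(Measure.pi fun _ : Fin n => μ) :=
  creation_adjoint_annihilation_general μ ω hω m hm hωm s hs f hf hfs n Ψ hΨ hΨ2 Ξ hΞ hsymΞ hΞs
end

section
/- Let f : X → ℂ be measurable with ∫_X ω^{−2}|f|² dμ < ∞. Then for every z ∈ ℂ \ [m, ∞) the function k ↦ |f(k)|²·(1/(ω(k) − z) − 1/(ω(k) + 1)) is μ-integrable, and the function F(z) := ∫_X |f(k)|²·(1/(ω(k) − z) − 1/(ω(k) + 1)) dμ(k) is holomorphic (complex differentiable) on the open set ℂ \ [m, ∞). -/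
/-!
Fix `z₀ ∉ [m, ∞)`. On a small ball around `z₀` the distance from `z` to a point `x ≥ m` of the
slit is at least a fixed multiple of `x`. Since
`1/(x - z) - 1/(x + 1) = (1 + z)/((x - z)(x + 1))`, the integrand and its `z`-derivative
`|f|²/(ω - z)²` are then both dominated, uniformly on the ball, by a multiple of `|f|²/ω²`,
which is integrable by hypothesis; differentiation under the integral sign concludes.
-/

open MeasureTheory Metric

theorem exists_ball_norm_le_mul_norm_sub_of_notMem {E : Type*} [SeminormedAddCommGroup E]
    {U : Set E} (hU : IsOpen U) {z₀ : E} (hz₀ : z₀ ∈ U) :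
    ∃ ε > 0, ∃ C, ∀ z ∈ ball z₀ ε, ∀ w ∉ U, ‖w‖ ≤ C * ‖w - z‖ := by
  obtain ⟨ε, hε, hball⟩ := isOpen_iff.1 hU z₀ hz₀
  refine ⟨ε / 2, half_pos hε, 1 + (‖z₀‖ + ε / 2) / (ε / 2), fun z hz w hw => ?_⟩
  rw [mem_ball_iff_norm] at hz
  have hwz : ε / 2 ≤ ‖w - z‖ := by
    by_contra! h
    refine hw (hball (mem_ball_iff_norm.2 ?_))
    calc ‖w - z₀‖ = ‖(w - z) + (z - z₀)‖ := by rw [sub_add_sub_cancel]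
      _ ≤ ‖w - z‖ + ‖z - z₀‖ := norm_add_le _ _
      _ < ε := by linarith
  have hzR : ‖z‖ ≤ ‖z₀‖ + ε / 2 := (norm_le_norm_add_norm_sub' z z₀).trans (by linarith)
  have hR : 0 ≤ ‖z₀‖ + ε / 2 := (norm_nonneg z).trans hzR
  calc ‖w‖ ≤ ‖w - z‖ + ‖z‖ := norm_le_norm_sub_add w z
    _ ≤ ‖w - z‖ + (‖z₀‖ + ε / 2) * (‖w - z‖ / (ε / 2)) := by
      gcongr
      exact hzR.trans (le_mul_of_one_le_right hR ((one_le_div (half_pos hε)).2 hwz))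
    _ = (1 + (‖z₀‖ + ε / 2) / (ε / 2)) * ‖w - z‖ := by ring

section Resolvent

variable {x : ℝ} {z : ℂ} {C : ℝ}

theorem ofReal_sub_ne_zero_of_le_mul_norm (hx : 0 < x) (hxz : x ≤ C * ‖(x : ℂ) - z‖) :
    (x : ℂ) - z ≠ 0 := by
  intro h
  rw [h, norm_zero, mul_zero] at hxz
  linarith

theorem norm_one_div_sub_sub_one_div_add_one_le (hx : 0 < x) (hxz : x ≤ C * ‖(x : ℂ) - z‖) :
    ‖1 / ((x : ℂ) - z) - 1 / ((x : ℂ) + 1)‖ ≤ C * ‖1 + z‖ / x ^ 2 := by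
  have hsub := ofReal_sub_ne_zero_of_le_mul_norm hx hxz
  have hadd : (x : ℂ) + 1 ≠ 0 := by exact_mod_cast (by linarith : x + 1 ≠ 0)
  have hCx : 0 ≤ C * ‖(x : ℂ) - z‖ := hx.le.trans hxz
  have hnorm_add : ‖(x : ℂ) + 1‖ = x + 1 := by
    rw [← Complex.ofReal_one, ← Complex.ofReal_add, Complex.norm_real,
      Real.norm_of_nonneg (by linarith)]
  rw [div_sub_div _ _ hsub hadd, norm_div, norm_mul, hnorm_add,
    show 1 * ((x : ℂ) + 1) - ((x : ℂ) - z) * 1 = 1 + z by ring,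
    div_le_div_iff₀ (by positivity) (by positivity)]
  calc ‖1 + z‖ * x ^ 2 = ‖1 + z‖ * x * x := by ring
    _ ≤ ‖1 + z‖ * (C * ‖(x : ℂ) - z‖) * (x + 1) := by gcongr; linarith
    _ = C * ‖1 + z‖ * (‖(x : ℂ) - z‖ * (x + 1)) := by ring

theorem norm_one_div_sub_sq_le (hx : 0 < x) (hxz : x ≤ C * ‖(x : ℂ) - z‖) :
    ‖1 / ((x : ℂ) - z) ^ 2‖ ≤ C ^ 2 / x ^ 2 := by
  have hsub := ofReal_sub_ne_zero_of_le_mul_norm hx hxz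
  rw [norm_div, norm_one, norm_pow, div_le_div_iff₀ (by positivity) (by positivity), one_mul,
    ← mul_pow]
  gcongr

theorem hasDerivAt_one_div_sub_sub (a c : ℂ) (hz : a - z ≠ 0) :
    HasDerivAt (fun w => 1 / (a - w) - c) (1 / (a - z) ^ 2) z := by
  have h := (((hasDerivAt_id z).const_sub a).inv hz).sub_const c
  simpa only [one_div, neg_neg, Pi.inv_apply, id, div_eq_mul_inv, one_mul] using h

end Resolvent

section ParametricIntegral

variable {X : Type*} {ω : X → ℝ} {U : Set ℂ}

theorem exists_ball_le_mul_norm_ofReal_sub (hU : IsOpen U) (hωpos : ∀ k, 0 < ω k)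
    (hωU : ∀ k, (ω k : ℂ) ∉ U) {z₀ : ℂ} (hz₀ : z₀ ∈ U) :
    ∃ ε > 0, ∃ C, ∀ z ∈ ball z₀ ε, ∀ k, ω k ≤ C * ‖(ω k : ℂ) - z‖ := by
  obtain ⟨ε, hε, C, hC⟩ := exists_ball_norm_le_mul_norm_sub_of_notMem hU hz₀
  refine ⟨ε, hε, C, fun z hz k => ?_⟩
  simpa [abs_of_pos (hωpos k)] using hC z hz _ (hωU k)

variable [MeasurableSpace X] {μ : Measure X} {W : X → ℂ}

theorem integrable_mul_one_div_sub_sub_one_div_add_one (hω : Measurable ω)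
    (hW : AEStronglyMeasurable W μ) (hωpos : ∀ k, 0 < ω k) (hU : IsOpen U)
    (hωU : ∀ k, (ω k : ℂ) ∉ U) (hWω : Integrable (fun k => ‖W k‖ / ω k ^ 2) μ) {z : ℂ}
    (hz : z ∈ U) :
    Integrable (fun k => W k * (1 / ((ω k : ℂ) - z) - 1 / ((ω k : ℂ) + 1))) μ := by
  obtain ⟨ε, hε, C, hC⟩ := exists_ball_le_mul_norm_ofReal_sub hU hωpos hωU hz
  refine (hWω.const_mul (C * ‖1 + z‖)).mono' (hW.mul (by fun_prop)) (ae_of_all _ fun k => ?_)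
  calc ‖W k * (1 / ((ω k : ℂ) - z) - 1 / ((ω k : ℂ) + 1))‖
      ≤ ‖W k‖ * (C * ‖1 + z‖ / ω k ^ 2) := by
        rw [norm_mul]
        gcongr
        exact norm_one_div_sub_sub_one_div_add_one_le (hωpos k) (hC z (mem_ball_self hε) k)
    _ = C * ‖1 + z‖ * (‖W k‖ / ω k ^ 2) := by ring

theorem hasDerivAt_integral_mul_one_div_sub_sub_one_div_add_one (hω : Measurable ω)
    (hW : AEStronglyMeasurable W μ) (hωpos : ∀ k, 0 < ω k) (hU : IsOpen U)
    (hωU : ∀ k, (ω k : ℂ) ∉ U) (hWω : Integrable (fun k => ‖W k‖ / ω k ^ 2) μ) {z₀ : ℂ}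
    (hz₀ : z₀ ∈ U) :
    HasDerivAt (fun z => ∫ k, W k * (1 / ((ω k : ℂ) - z) - 1 / ((ω k : ℂ) + 1)) ∂μ)
      (∫ k, W k * (1 / ((ω k : ℂ) - z₀) ^ 2) ∂μ) z₀ := by
  obtain ⟨ε, hε, C, hC⟩ := exists_ball_le_mul_norm_ofReal_sub hU hωpos hωU hz₀
  refine (hasDerivAt_integral_of_dominated_loc_of_deriv_le
    (F := fun z k => W k * (1 / ((ω k : ℂ) - z) - 1 / ((ω k : ℂ) + 1)))
    (F' := fun z k => W k * (1 / ((ω k : ℂ) - z) ^ 2)) (ball_mem_nhds z₀ hε)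
    (.of_forall fun z => hW.mul (by fun_prop))
    (integrable_mul_one_div_sub_sub_one_div_add_one hω hW hωpos hU hωU hWω hz₀)
    (hW.mul (by fun_prop : Measurable fun k => 1 / ((ω k : ℂ) - z₀) ^ 2).aestronglyMeasurable)
    (ae_of_all _ fun k z hz => ?_) (hWω.const_mul (C ^ 2))
    (ae_of_all _ fun k z hz => ?_)).2
  · calc ‖W k * (1 / ((ω k : ℂ) - z) ^ 2)‖ ≤ ‖W k‖ * (C ^ 2 / ω k ^ 2) := by
          rw [norm_mul]
          gcongr
          exact norm_one_div_sub_sq_le (hωpos k) (hC z hz k)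
      _ = C ^ 2 * (‖W k‖ / ω k ^ 2) := by ring
  · exact (hasDerivAt_one_div_sub_sub _ _
      (ofReal_sub_ne_zero_of_le_mul_norm (hωpos k) (hC z hz k))).const_mul (W k)

end ParametricIntegral

theorem isOpen_setOf_im_ne_zero_or_re_lt (m : ℝ) : IsOpen {z : ℂ | z.im ≠ 0 ∨ z.re < m} :=
  (isOpen_ne_fun Complex.continuous_im continuous_const).union
    (isOpen_lt Complex.continuous_re continuous_const)

/-- For `f ∈ H_{−2}`, on the open set `ℂ \ [m,∞)`
(`= {z | Im z ≠ 0 ∨ Re z < m}`) the integrand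
`k ↦ |f(k)|²(1/(ω(k)−z) − 1/(ω(k)+1))` is integrable and
`F(z) := ∫ |f|²(1/(ω−z) − 1/(ω+1)) dμ` is holomorphic. -/
theorem renormalized_selfEnergy_holomorphic
    {X : Type*} [MeasurableSpace X] (μ : Measure X)
    (ω : X → ℝ) (hω : Measurable ω) (m : ℝ) (hm : 0 < m) (hωm : ∀ k, m ≤ ω k)
    (f : X → ℂ) (hf : Measurable f)
    (hf2 : (∫⁻ k, ENNReal.ofReal (ω k ^ (-2 : ℝ) * ‖f k‖ ^ 2) ∂μ) ≠ ⊤) :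
    (∀ z ∈ {z : ℂ | z.im ≠ 0 ∨ z.re < m},
      Integrable
        (fun k => (‖f k‖ ^ 2 : ℂ) * (1 / ((ω k : ℂ) - z) - 1 / ((ω k : ℂ) + 1))) μ) ∧
    DifferentiableOn ℂ
      (fun z : ℂ =>
        ∫ k, (‖f k‖ ^ 2 : ℂ) * (1 / ((ω k : ℂ) - z) - 1 / ((ω k : ℂ) + 1)) ∂μ)
      {z : ℂ | z.im ≠ 0 ∨ z.re < m} := by
  have hωpos : ∀ k, 0 < ω k := fun k => hm.trans_le (hωm k)
  have hωU : ∀ k, (ω k : ℂ) ∉ {z : ℂ | z.im ≠ 0 ∨ z.re < m} := fun k => by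
    simpa using hωm k
  have hW : AEStronglyMeasurable (fun k => (‖f k‖ ^ 2 : ℂ)) μ := by fun_prop
  have hWω : Integrable (fun k => ‖(‖f k‖ ^ 2 : ℂ)‖ / ω k ^ 2) μ := by
    refine ⟨(hW.norm.aemeasurable.div (hω.pow_const 2).aemeasurable).aestronglyMeasurable, ?_⟩
    rw [hasFiniteIntegral_iff_ofReal (ae_of_all _ fun k => by positivity)]
    convert hf2.lt_top using 4 with k
    simp [Real.rpow_neg_ofNat, div_eq_inv_mul]
  exact ⟨fun z hz => integrable_mul_one_div_sub_sub_one_div_add_one hω hW hωpos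
      (isOpen_setOf_im_ne_zero_or_re_lt m) hωU hWω hz,
    fun z hz => (hasDerivAt_integral_mul_one_div_sub_sub_one_div_add_one hω hW hωpos
      (isOpen_setOf_im_ne_zero_or_re_lt m) hωU hWω hz).differentiableAt.differentiableWithinAt⟩
end

section
/- Let f : X → ℂ be measurable with ∫_X ω^{−1}|f|² dμ < ∞, let z ∈ ℂ with Im z ≠ 0, let E ≥ 0, and let ω_e, λ ∈ ℝ. Then the function k ↦ |f(k)|²/(ω(k) + E − z) is μ-integrable, and |ω_e + E − z − λ² ∫_X |f(k)|²/(ω(k) + E − z) dμ(k)| ≥ |Im z|. (This fiber-wise lower bound is the key estimate showing that the propagator G_{f,ω_e}(z) = ω_e − z + dΓ(ω) − λ²S_f(z) of the rotating-wave spin–boson model has a bounded inverse for non-real z.) -/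
open MeasureTheory ENNReal

/-!
Write `ω(k) + E - z = ω(k) - w` with `w = z - E`, so `Im w = Im z ≠ 0`. Since `|Im w| ≤ |x - w|`
for real `x`, also `|x| ≤ (1 + |Re w| / |Im w|) |x - w|`, so `|f|² / |ω - w|` is dominated by a
multiple of the integrable `ω⁻¹ |f|²`. For `r ≥ 0`, `Im (r / (x - w)) = r Im w / |x - w|²` has the
sign of `Im w`, hence so does `Im J` for the integral `J`, and then
`|Im (ω_e - w - λ² J)| = |Im w + λ² Im J| ≥ |Im w|`.
-/

lemma abs_le_abs_add_of_mul_nonneg {a b : ℝ} (h : 0 ≤ a * b) : |a| ≤ |a + b| := by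
  rw [← sq_le_sq]
  nlinarith [sq_nonneg b]

namespace Complex

lemma abs_im_le_norm_ofReal_sub (x : ℝ) (w : ℂ) : |w.im| ≤ ‖(x : ℂ) - w‖ := by
  simpa using abs_im_le_norm ((x : ℂ) - w)

lemma abs_le_mul_norm_ofReal_sub (x : ℝ) {w : ℂ} (hw : w.im ≠ 0) :
    |x| ≤ (1 + |w.re| / |w.im|) * ‖(x : ℂ) - w‖ := by
  have hre : |x - w.re| ≤ ‖(x : ℂ) - w‖ := by simpa using abs_re_le_norm ((x : ℂ) - w)
  have hwre : |w.re| ≤ |w.re| / |w.im| * ‖(x : ℂ) - w‖ := by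
    rw [div_mul_eq_mul_div, le_div_iff₀ (abs_pos.mpr hw)]
    exact mul_le_mul_of_nonneg_left (abs_im_le_norm_ofReal_sub x w) (abs_nonneg _)
  linarith [abs_sub_abs_le_abs_sub x w.re]

lemma norm_ofReal_div_ofReal_sub_le {r x : ℝ} (hr : 0 ≤ r) (hx : 0 < x) {w : ℂ}
    (hw : w.im ≠ 0) : ‖(r : ℂ) / ((x : ℂ) - w)‖ ≤ (1 + |w.re| / |w.im|) * (x⁻¹ * r) := by
  have hpos : 0 < ‖(x : ℂ) - w‖ := (abs_pos.mpr hw).trans_le (abs_im_le_norm_ofReal_sub x w)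
  have hx' : x ≤ (1 + |w.re| / |w.im|) * ‖(x : ℂ) - w‖ :=
    (le_abs_self x).trans (abs_le_mul_norm_ofReal_sub x hw)
  rw [norm_div, norm_real, Real.norm_of_nonneg hr, div_le_iff₀ hpos]
  calc r = x⁻¹ * r * x := by field_simp
    _ ≤ x⁻¹ * r * ((1 + |w.re| / |w.im|) * ‖(x : ℂ) - w‖) := by gcongr
    _ = _ := by ring

lemma im_ofReal_div_ofReal_sub (r x : ℝ) (w : ℂ) :
    ((r : ℂ) / ((x : ℂ) - w)).im = r * w.im / normSq ((x : ℂ) - w) := by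
  simp [div_im, neg_div]

lemma mul_im_ofReal_div_ofReal_sub_nonneg {r : ℝ} (hr : 0 ≤ r) (x : ℝ) (w : ℂ) :
    0 ≤ w.im * ((r : ℂ) / ((x : ℂ) - w)).im := by
  rw [im_ofReal_div_ofReal_sub, ← mul_div_assoc]
  exact div_nonneg (by nlinarith [sq_nonneg w.im]) (normSq_nonneg _)

lemma abs_im_le_norm_ofReal_sub_sub_mul {w J : ℂ} (hJ : 0 ≤ w.im * J.im) (a : ℝ) {t : ℝ}
    (ht : 0 ≤ t) : |w.im| ≤ ‖(a : ℂ) - w - t * J‖ := by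
  have him : ((a : ℂ) - w - t * J).im = -(w.im + t * J.im) := by simp; ring
  calc |w.im| ≤ |w.im + t * J.im| := abs_le_abs_add_of_mul_nonneg (by nlinarith)
    _ = |((a : ℂ) - w - t * J).im| := by rw [him, abs_neg]
    _ ≤ _ := abs_im_le_norm _

end Complex

section Integral

variable {X : Type*} [MeasurableSpace X] {μ : Measure X}

lemma mul_im_integral_nonneg {g : X → ℂ} (hg : Integrable g μ) {c : ℝ}
    (h : ∀ k, 0 ≤ c * (g k).im) : 0 ≤ c * (∫ k, g k ∂μ).im := by
  have := integral_im hg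
  simp only [RCLike.im_to_complex] at this
  rw [← this, ← integral_const_mul]
  exact integral_nonneg h

lemma integrable_ofReal_div_ofReal_sub {ω r : X → ℝ} (hω : Measurable ω) (hω0 : ∀ k, 0 < ω k)
    (hr : Measurable r) (hr0 : ∀ k, 0 ≤ r k) (hrω : Integrable (fun k => (ω k)⁻¹ * r k) μ)
    {w : ℂ} (hw : w.im ≠ 0) : Integrable (fun k => (r k : ℂ) / ((ω k : ℂ) - w)) μ :=
  (hrω.const_mul _).mono'
    (by fun_prop : Measurable fun k => (r k : ℂ) / ((ω k : ℂ) - w)).aestronglyMeasurable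
    (.of_forall fun k => Complex.norm_ofReal_div_ofReal_sub_le (hr0 k) (hω0 k) hw)

end Integral

theorem propagator_lower_bound_general
    {X : Type*} [MeasurableSpace X] (μ : Measure X)
    (ω : X → ℝ) (hω : Measurable ω) (m : ℝ) (hm : 0 < m) (hωm : ∀ k, m ≤ ω k)
    (f : X → ℂ) (hf : Measurable f)
    (hf1 : (∫⁻ k, ENNReal.ofReal (ω k ^ (-1 : ℝ) * ‖f k‖ ^ 2) ∂μ) ≠ ⊤)
    (z : ℂ) (hz : z.im ≠ 0) (E : ℝ) (ωe lam : ℝ) :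
    Integrable (fun k => (‖f k‖ ^ 2 : ℂ) / ((ω k : ℂ) + (E : ℂ) - z)) μ ∧
    |z.im| ≤
      ‖(ωe : ℂ) + (E : ℂ) - z -
        (lam ^ 2 : ℂ) * ∫ k, (‖f k‖ ^ 2 : ℂ) / ((ω k : ℂ) + (E : ℂ) - z) ∂μ‖ := by
  have hω0 : ∀ k, 0 < ω k := fun k => hm.trans_le (hωm k)
  have hfω : Integrable (fun k => (ω k)⁻¹ * ‖f k‖ ^ 2) μ := by
    refine (lintegral_ofReal_ne_top_iff_integrable
      (by fun_prop : Measurable fun k => (ω k)⁻¹ * ‖f k‖ ^ 2).aestronglyMeasurable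
      (.of_forall fun k => mul_nonneg (inv_nonneg.mpr (hω0 k).le) (sq_nonneg _))).mp ?_
    simpa only [Real.rpow_neg_one] using hf1
  set w : ℂ := z - E
  have hw : w.im = z.im := by simp [w]
  have hshift : ∀ x : ℝ, (x : ℂ) + E - z = x - w := fun x => by ring
  have hint := integrable_ofReal_div_ofReal_sub hω hω0 (by fun_prop) (fun k => sq_nonneg ‖f k‖)
    hfω (hw ▸ hz)
  simp only [hshift, ← hw, ← Complex.ofReal_pow]
  exact ⟨hint, Complex.abs_im_le_norm_ofReal_sub_sub_mul
    (mul_im_integral_nonneg hint fun k => Complex.mul_im_ofReal_div_ofReal_sub_nonneg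
      (sq_nonneg _) _ _) ωe (sq_nonneg lam)⟩

/-- For `f ∈ H_{−1}`, non-real `z`, `E ≥ 0` and real `ω_e, λ`:
`k ↦ |f(k)|²/(ω(k)+E−z)` is integrable and
`|ω_e + E − z − λ² ∫ |f|²/(ω+E−z) dμ| ≥ |Im z|` (the fiber-wise lower bound on the
propagator `G_{f,ω_e}(z)` of the rotating-wave spin–boson model). -/
theorem propagator_lower_bound
    {X : Type*} [MeasurableSpace X] (μ : Measure X)
    (ω : X → ℝ) (hω : Measurable ω) (m : ℝ) (hm : 0 < m) (hωm : ∀ k, m ≤ ω k)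
    (f : X → ℂ) (hf : Measurable f)
    (hf1 : (∫⁻ k, ENNReal.ofReal (ω k ^ (-1 : ℝ) * ‖f k‖ ^ 2) ∂μ) ≠ ⊤)
    (z : ℂ) (hz : z.im ≠ 0) (E : ℝ) (hE : 0 ≤ E) (ωe lam : ℝ) :
    Integrable (fun k => (‖f k‖ ^ 2 : ℂ) / ((ω k : ℂ) + (E : ℂ) - z)) μ ∧
    |z.im| ≤
      ‖(ωe : ℂ) + (E : ℂ) - z -
        (lam ^ 2 : ℂ) * ∫ k, (‖f k‖ ^ 2 : ℂ) / ((ω k : ℂ) + (E : ℂ) - z) ∂μ‖ :=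
  propagator_lower_bound_general μ ω hω m hm hωm f hf hf1 z hz E ωe lam
end
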